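/- There is no connected graph G with -1 < λ_2(D(G)) < 1 - √3, where λ_2 denotes the second largest eigenvalue of the distance matrix of G. -/

import Mathlib

noncomputable def sortedEigenvalues {ι : Type*} [Fintype ι] [DecidableEq ι]
    (A : Matrix ι ι ℝ) (hA : A.IsHermitian) : List ℝ :=
  (Finset.univ.val.map hA.eigenvalues).sort (· ≤ ·)

/-- `eig A hA k` is the `k`-th largest eigenvalue of `A` (1-indexed). -/
noncomputable def eig {ι : Type*} [Fintype ι] [DecidableEq ι]
    (A : Matrix ι ι ℝ) (hA : A.IsHermitian) (k : ℕ) : ℝ :=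
  (sortedEigenvalues A hA)[Fintype.card ι - k]!

/-!
For a complete graph, `D = J - I` acts as `-1` on the hyperplane orthogonal to the all-ones
vector, so by Courant–Fischer `λ₂ ≤ -1`. Otherwise the first three vertices `i ~ j ~ k` of a
shortest path between two non-adjacent vertices satisfy `d(i, k) = 2`, and on the plane of vectors
supported on `{i, j, k}` and constant on `{i, k}` the quadratic form of `D` is at least
`(1 - √3) ‖x‖²`, so `λ₂ ≥ 1 - √3`.
-/

open Matrix Finset

section Antitone

variable {N : ℕ} {α : Type*} [LinearOrder α] {f : Fin N → α} {c : α}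

lemma Antitone.le_apply_of_lt_card_filter (hf : Antitone f) {j : Fin N}
    (hj : (j : ℕ) < #{i | c ≤ f i}) : c ≤ f j := by
  by_contra! hlt
  have : ({i | c ≤ f i} : Finset _) ⊆ Iio j := fun i hi => by
    simp only [mem_filter, mem_univ, true_and] at hi
    exact mem_Iio.mpr (lt_of_not_ge fun hji => (hlt.trans_le' (hf hji)).not_ge hi)
  simpa using (card_le_card this).trans_lt' hj

lemma Antitone.apply_le_of_card_filter_le (hf : Antitone f) {j : Fin N}
    (hj : #{i | c < f i} ≤ j) : f j ≤ c := by
  by_contra! hlt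
  have : Iic j ⊆ ({i | c < f i} : Finset _) := fun i hi => by
    simpa using hlt.trans_le (hf (mem_Iic.mp hi))
  simpa using (card_le_card this).trans hj

end Antitone

lemma sum_mul_sq_lt_sum_mul_sq {ι : Type*} [Fintype ι] {μ ν r : ι → ℝ} (hr : r ≠ 0)
    (h : ∀ i, r i ≠ 0 → μ i < ν i) : ∑ i, μ i * r i ^ 2 < ∑ i, ν i * r i ^ 2 := by
  obtain ⟨j, hj⟩ := Function.ne_iff.mp hr
  refine sum_lt_sum (fun i _ => ?_) ⟨j, mem_univ j, ?_⟩
  · by_cases hi : r i = 0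
    · simp [hi]
    · exact mul_le_mul_of_nonneg_right (h i hi).le (sq_nonneg _)
  · exact mul_lt_mul_of_pos_right (h j hj) (sq_pos_of_ne_zero hj)

namespace OrthonormalBasis

variable {ι E : Type*} [Fintype ι] [NormedAddCommGroup E] [InnerProductSpace ℝ E]
  [FiniteDimensional ℝ E] (b : OrthonormalBasis ι ℝ E)

lemma exists_mem_ne_zero_forall_inner_eq_zero (V : Submodule ℝ E) (T : Finset ι)
    (hT : #T < Module.finrank ℝ V) :
    ∃ x ∈ V, x ≠ 0 ∧ ∀ i ∈ T, inner ℝ (b i) x = 0 := by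
  let f : V →ₗ[ℝ] T → ℝ := LinearMap.pi fun i => (innerₛₗ ℝ (b i)).comp V.subtype
  obtain ⟨x, hx, hx0⟩ := Submodule.exists_mem_ne_zero_of_ne_bot
    (LinearMap.ker_ne_bot_of_finrank_lt (f := f) (by simpa using hT))
  refine ⟨x, x.2, by simpa using hx0, fun i hi => ?_⟩
  simpa [f] using congrFun (LinearMap.mem_ker.mp hx) ⟨i, hi⟩

-- The dimension count behind the Courant–Fischer min-max principle.
lemma finrank_le_card_of_forall_sum_mul_sq_le {μ ν : ι → ℝ} (V : Submodule ℝ E)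
    (hV : ∀ x ∈ V, ∑ i, ν i * inner ℝ (b i) x ^ 2 ≤ ∑ i, μ i * inner ℝ (b i) x ^ 2) :
    Module.finrank ℝ V ≤ #{i | ν i ≤ μ i} := by
  classical
  by_contra! h
  obtain ⟨x, hxV, hx0, hx⟩ := b.exists_mem_ne_zero_forall_inner_eq_zero V _ h
  have hr : (fun i => inner ℝ (b i) x) ≠ 0 := fun h0 => hx0 <| b.repr.map_eq_zero_iff.mp <| by
    ext i
    simpa [b.repr_apply_apply] using congrFun h0 i
  refine (hV x hxV).not_gt (sum_mul_sq_lt_sum_mul_sq hr fun i hi => lt_of_not_ge fun hle => ?_)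
  exact hi (hx i (by simpa using hle))

end OrthonormalBasis

namespace Matrix.IsHermitian

variable {ι : Type*} [Fintype ι] [DecidableEq ι] {A : Matrix ι ι ℝ} (hA : A.IsHermitian)

lemma map_eigenvalues_eq_map_eigenvalues₀ :
    univ.val.map hA.eigenvalues = univ.val.map hA.eigenvalues₀ := by
  simpa using hA.roots_charpoly_eq_eigenvalues.symm.trans hA.roots_charpoly_eq_eigenvalues₀

lemma sortedEigenvalues_eq_reverse_ofFn :
    sortedEigenvalues A hA = (List.ofFn hA.eigenvalues₀).reverse := by
  apply List.Perm.eq_of_sortedLE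
  · exact (Multiset.pairwise_sort _ _).sortedLE
  · rw [List.sortedLE_iff_pairwise, List.pairwise_reverse]
    exact hA.eigenvalues₀_antitone.sortedGE_ofFn.pairwise
  · rw [← Multiset.coe_eq_coe, sortedEigenvalues, Multiset.sort_eq, ← Multiset.coe_reverse,
      map_eigenvalues_eq_map_eigenvalues₀, Fin.univ_val_map, List.reverse_reverse]

lemma eig_eq_eigenvalues₀ {k : ℕ} (hk0 : k ≠ 0) (hk : k - 1 < Fintype.card ι) :
    eig A hA k = hA.eigenvalues₀ ⟨k - 1, hk⟩ := by
  rw [eig, sortedEigenvalues_eq_reverse_ofFn, getElem!_pos _ _ (by simp; omega),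
    List.getElem_reverse, List.getElem_ofFn]
  congr 2
  simp only [List.length_ofFn]
  omega

lemma card_filter_eigenvalues (p : ℝ → Prop) [DecidablePred p] :
    #{i | p (hA.eigenvalues i)} = #{j | p (hA.eigenvalues₀ j)} :=
  card_equiv (Fintype.equivOfCardEq (Fintype.card_fin _)).symm fun _ => by
    simp only [mem_filter, mem_univ, true_and]; rfl

lemma le_eig_of_le_card {k : ℕ} {c : ℝ} (hk0 : k ≠ 0)
    (hk : k ≤ #{i | c ≤ hA.eigenvalues i}) : c ≤ eig A hA k := by
  have hkι : k - 1 < Fintype.card ι :=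
    (Nat.sub_lt (Nat.pos_of_ne_zero hk0) one_pos).trans_le (hk.trans (card_filter_le _ _))
  rw [eig_eq_eigenvalues₀ hA hk0 hkι]
  refine hA.eigenvalues₀_antitone.le_apply_of_lt_card_filter ?_
  rw [← card_filter_eigenvalues hA (c ≤ ·)]
  dsimp only
  omega

lemma eig_le_of_card_lt {k : ℕ} {c : ℝ} (hk0 : k ≠ 0) (hkι : k ≤ Fintype.card ι)
    (hk : #{i | c < hA.eigenvalues i} < k) : eig A hA k ≤ c := by
  rw [eig_eq_eigenvalues₀ hA hk0 (by omega)]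
  refine hA.eigenvalues₀_antitone.apply_le_of_card_filter_le ?_
  rw [← card_filter_eigenvalues hA (c < ·)]
  dsimp only
  omega

lemma toEuclideanLin_eigenvectorBasis (i : ι) :
    toEuclideanLin A (hA.eigenvectorBasis i) = hA.eigenvalues i • hA.eigenvectorBasis i := by
  simp [toLpLin_apply, hA.mulVec_eigenvectorBasis]

lemma dotProduct_mulVec_eq_sum_eigenvalues_mul_sq (x : EuclideanSpace ℝ ι) :
    x ⬝ᵥ A *ᵥ x = ∑ i, hA.eigenvalues i * inner ℝ (hA.eigenvectorBasis i) x ^ 2 := by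
  have : x ⬝ᵥ A *ᵥ x = inner ℝ x (toEuclideanLin A x) := by
    simp [EuclideanSpace.inner_eq_star_dotProduct, dotProduct_comm]
  rw [this, ← hA.eigenvectorBasis.sum_inner_mul_inner]
  refine sum_congr rfl fun i _ => ?_
  rw [← isSymmetric_toEuclideanLin_iff.mpr hA, toEuclideanLin_eigenvectorBasis,
    real_inner_smul_left, real_inner_comm]
  ring

lemma mul_norm_sq_eq_sum_mul_sq (c : ℝ) (x : EuclideanSpace ℝ ι) :
    c * ‖x‖ ^ 2 = ∑ i, c * inner ℝ (hA.eigenvectorBasis i) x ^ 2 := by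
  rw [← hA.eigenvectorBasis.sum_sq_inner_right, mul_sum]

variable {V : Submodule ℝ (EuclideanSpace ℝ ι)} {c : ℝ} {k : ℕ}

theorem le_eig_of_le_finrank (hk0 : k ≠ 0) (hkV : k ≤ Module.finrank ℝ V)
    (hV : ∀ x ∈ V, c * ‖x‖ ^ 2 ≤ x ⬝ᵥ A *ᵥ x) : c ≤ eig A hA k := by
  refine hA.le_eig_of_le_card hk0 (hkV.trans ?_)
  refine hA.eigenvectorBasis.finrank_le_card_of_forall_sum_mul_sq_le V fun x hx => ?_
  rw [← mul_norm_sq_eq_sum_mul_sq, ← dotProduct_mulVec_eq_sum_eigenvalues_mul_sq]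
  exact hV x hx

theorem eig_le_of_lt_finrank_add (hk0 : k ≠ 0) (hkι : k ≤ Fintype.card ι)
    (hkV : Fintype.card ι < Module.finrank ℝ V + k)
    (hV : ∀ x ∈ V, x ⬝ᵥ A *ᵥ x ≤ c * ‖x‖ ^ 2) : eig A hA k ≤ c := by
  refine hA.eig_le_of_card_lt hk0 hkι ?_
  have hle : Module.finrank ℝ V ≤ #{i | hA.eigenvalues i ≤ c} := by
    refine hA.eigenvectorBasis.finrank_le_card_of_forall_sum_mul_sq_le V fun x hx => ?_
    rw [← mul_norm_sq_eq_sum_mul_sq, ← dotProduct_mulVec_eq_sum_eigenvalues_mul_sq]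
    exact hV x hx
  have := card_filter_add_card_filter_not (s := univ) fun i => c < hA.eigenvalues i
  simp only [not_lt, card_univ] at this
  omega

lemma eig_two_le_neg_one_of_eq_adjMatrix_top (hK : A = (⊤ : SimpleGraph ι).adjMatrix ℝ)
    (hι : 2 ≤ Fintype.card ι) : eig A hA 2 ≤ -1 := by
  set one : EuclideanSpace ℝ ι := WithLp.toLp 2 fun _ => 1
  have hone : one ≠ 0 := by
    obtain ⟨p⟩ : Nonempty ι := Fintype.card_pos_iff.mp (by omega)
    intro h
    simpa [one] using congrArg (fun v : EuclideanSpace ℝ ι => v p) h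
  have hdim := (ℝ ∙ one).finrank_add_finrank_orthogonal
  rw [finrank_span_singleton hone, finrank_euclideanSpace] at hdim
  refine hA.eig_le_of_lt_finrank_add two_ne_zero hι (V := (ℝ ∙ one)ᗮ) (by omega) fun x hx => ?_
  rw [Submodule.mem_orthogonal_singleton_iff_inner_right] at hx
  have hsum : ∑ q, x q = 0 := by
    simpa [one, EuclideanSpace.inner_eq_star_dotProduct, dotProduct] using hx
  have hAx : A *ᵥ x = -x := by
    ext p
    have h (q : ι) : A p q * x q = x q - if p = q then x q else 0 := by
      by_cases hpq : p = q <;> simp [hK, hpq]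
    simp [mulVec, dotProduct, h, sum_sub_distrib, hsum]
  rw [hAx, ← real_inner_self_eq_norm_sq, EuclideanSpace.inner_eq_star_dotProduct]
  simp

lemma one_sub_sqrt_three_le_eig_two {i j k : ι}
    (hP : A.submatrix ![i, j, k] ![i, j, k] = !![0, 1, 2; 1, 0, 1; 2, 1, 0]) :
    1 - √3 ≤ eig A hA 2 := by
  have hentries := Matrix.ext_iff.mpr hP
  simp only [submatrix_apply, of_apply, cons_val', cons_val_fin_one, Fin.forall_fin_succ,
    Fin.isValue, cons_val_zero, cons_val_succ, forall_const] at hentries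
  obtain ⟨⟨hii, hij, hik⟩, ⟨hji, hjj, hjk⟩, hki, hkj, hkk⟩ := hentries
  have nij : i ≠ j := by rintro rfl; linarith
  have nik : i ≠ k := by rintro rfl; linarith
  have njk : j ≠ k := by rintro rfl; linarith
  -- `u` and `v` span the eigenvectors `(1, -1 ± √3, 1)` of the `3 × 3` block for `1 ± √3`.
  set u : EuclideanSpace ℝ ι := EuclideanSpace.single i 1 + EuclideanSpace.single k 1
  set v : EuclideanSpace ℝ ι := EuclideanSpace.single j 1
  have hli : LinearIndependent ℝ ![u, v] := by
    refine LinearIndependent.pair_iff.mpr fun s t h => ⟨?_, ?_⟩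
    · simpa [u, v, nij, nik] using congrArg (fun x : EuclideanSpace ℝ ι => x i) h
    · simpa [u, v, nij.symm, njk] using congrArg (fun x : EuclideanSpace ℝ ι => x j) h
  refine hA.le_eig_of_le_finrank two_ne_zero (V := Submodule.span ℝ (Set.range ![u, v]))
    (by rw [finrank_span_eq_card hli]; simp) fun x hx => ?_
  obtain ⟨c, rfl⟩ := (Submodule.mem_span_range_iff_exists_fun ℝ).mp hx
  rw [← real_inner_self_eq_norm_sq, EuclideanSpace.inner_eq_star_dotProduct]
  simp only [Fin.sum_univ_two, Fin.isValue, cons_val_zero, cons_val_one, cons_val_fin_one, u, v,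
    smul_add, WithLp.ofLp_add, WithLp.ofLp_smul, PiLp.ofLp_single, star_trivial, dotProduct_add,
    dotProduct_smul, dotProduct_single, add_dotProduct, smul_dotProduct, single_dotProduct,
    mulVec_add, mulVec_smul, mulVec_single, MulOpposite.op_one, one_smul, col_apply, Pi.add_apply,
    Pi.smul_apply, Pi.single_eq_same, Pi.single_eq_of_ne, nij, nik, njk, nij.symm, nik.symm,
    njk.symm, ne_eq, not_false_eq_true, smul_eq_mul, mul_one, mul_zero, add_zero, zero_add, one_mul,
    hii, hij, hik, hji, hjj, hjk, hki, hkj, hkk]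
  have hs : √3 ^ 2 = 3 := Real.sq_sqrt (by norm_num)
  have hs1 : 1 < √3 := by rw [Real.lt_sqrt] <;> norm_num
  -- with `a = c 0`, `b = c 1`: `(√3 - 1)(4a² + 4ab - (1 - √3)(2a² + b²)) = (2a + (√3 - 1)b)²`
  nlinarith [sq_nonneg (2 * c 0 + (√3 - 1) * c 1)]

end Matrix.IsHermitian

lemma SimpleGraph.Reachable.exists_adj_adj_dist_eq_two {V : Type*} {G : SimpleGraph V} {u v : V}
    (h : G.Reachable u v) (huv : u ≠ v) (hnadj : ¬ G.Adj u v) :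
    ∃ i j k, G.Adj i j ∧ G.Adj j k ∧ G.dist i k = 2 := by
  obtain ⟨p, hp⟩ := h.exists_walk_length_eq_dist
  obtain ⟨i, j, k, hij, hjk, hnik, hik⟩ :=
    p.exists_adj_adj_not_adj_ne hp (h.one_lt_dist_of_ne_of_not_adj huv hnadj)
  refine ⟨i, j, k, hij, hjk, ?_⟩
  have hj : j ∈ G.commonNeighbors i k := G.mem_commonNeighbors.mpr ⟨hij, hjk.symm⟩
  rw [SimpleGraph.dist, SimpleGraph.edist_eq_two_iff.mpr ⟨hik, hnik, j, hj⟩]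
  rfl

theorem no_graph_with_second_eigenvalue_in_gap {n : ℕ} (hn : 2 ≤ n)
    (G : SimpleGraph (Fin n)) (hG : G.Connected)
    (hD : (Matrix.of fun i j => (G.dist i j : ℝ)).IsHermitian) :
    ¬ (-1 < eig _ hD 2 ∧ eig _ hD 2 < 1 - Real.sqrt 3) := by
  rintro ⟨hlow, hup⟩
  by_cases hcomplete : ∀ u v, u ≠ v → G.Adj u v
  · have hK :
        (Matrix.of fun i j => (G.dist i j : ℝ)) = (⊤ : SimpleGraph (Fin n)).adjMatrix ℝ := by
      ext p q
      by_cases hpq : p = q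
      · simp [hpq]
      · simp [hpq, SimpleGraph.dist_eq_one_iff_adj.mpr (hcomplete p q hpq)]
    linarith [hD.eig_two_le_neg_one_of_eq_adjMatrix_top hK (by simpa using hn)]
  · push Not at hcomplete
    obtain ⟨u, v, huv, hnadj⟩ := hcomplete
    obtain ⟨i, j, k, hij, hjk, hik⟩ := (hG.preconnected u v).exists_adj_adj_dist_eq_two huv hnadj
    have hP : (Matrix.of fun i j => (G.dist i j : ℝ)).submatrix ![i, j, k] ![i, j, k] =
        !![0, 1, 2; 1, 0, 1; 2, 1, 0] := by
      ext p q
      fin_cases p <;> fin_cases q <;> simp [SimpleGraph.dist_comm, hij, hjk, hik,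
        SimpleGraph.dist_eq_one_iff_adj.mpr]
    linarith [hD.one_sub_sqrt_three_le_eig_two hP]
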